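/- arXiv:1312.3586 — 3 statements merged into one kernel-verified Lean document; each statement's English description precedes it below -/
import Mathlib

section
/- For every t ∈ [0, 2π) and all M₁, M₂ ∈ L₀, one has ⟨ψ_t, (M₁ ⊗ M₂) φ_t⟩ = 0. -/
open Matrix Kronecker Real

/-- η = exp(iπ/4). -/
noncomputable def eta : ℂ := Complex.exp (Real.pi / 4 * Complex.I)

/-- U = diag(η, conj η) ∈ M₂(ℂ). -/
noncomputable def U : Matrix (Fin 2) (Fin 2) ℂ := !![eta, 0; 0, star eta]

/-- L₀ ⊂ M₄(ℂ): block matrices [[A, λU*], [λU, A]], A ∈ M₂(ℂ), λ ∈ ℂ,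
under the identification ℂ⁴ = ℂ² ⊕ ℂ². -/
noncomputable def L0 : Set (Matrix (Fin 4) (Fin 4) ℂ) :=
  {M | ∃ (A : Matrix (Fin 2) (Fin 2) ℂ) (l : ℂ),
    M = Matrix.reindex finSumFinEquiv finSumFinEquiv (Matrix.fromBlocks A (l • Uᴴ) (l • U) A)}

/-- φ_t = (|1⟩⊗|1⟩ + e^{it}|2⟩⊗|2⟩)/√2 ∈ ℂ⁴ ⊗ ℂ⁴, the tensor square being modelled as
functions on (Fin 4) × (Fin 4). -/
noncomputable def phiT (t : ℝ) : Fin 4 × Fin 4 → ℂ := fun p =>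
  ((if p = (0, 0) then 1 else 0) +
    Complex.exp (t * Complex.I) * (if p = (1, 1) then 1 else 0)) / Real.sqrt 2

/-- ψ_t = (|3⟩⊗|3⟩ + e^{it}|4⟩⊗|4⟩)/√2 ∈ ℂ⁴ ⊗ ℂ⁴. -/
noncomputable def psiT (t : ℝ) : Fin 4 × Fin 4 → ℂ := fun p =>
  ((if p = (2, 2) then 1 else 0) +
    Complex.exp (t * Complex.I) * (if p = (3, 3) then 1 else 0)) / Real.sqrt 2

/-- η² + (conj η)² = i + (-i) = 0, the key algebraic identity. -/
lemma eta_key : eta * eta + (starRingEnd ℂ) eta * (starRingEnd ℂ) eta = 0 := by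
  have h : eta * eta = Complex.I := by
    rw [eta, ← Complex.exp_add]
    have : ((Real.pi:ℂ) / 4 * Complex.I + (Real.pi:ℂ) / 4 * Complex.I)
        = ↑(Real.pi/2) * Complex.I := by push_cast; ring
    rw [this, Complex.exp_mul_I]
    simp
  have h2 : (starRingEnd ℂ) eta * (starRingEnd ℂ) eta = -Complex.I := by
    rw [show (starRingEnd ℂ) eta = star eta from rfl, ← star_mul', h]
    simp
  rw [h, h2]; ring

/-- Members of L₀ written as explicit 4×4 matrices. -/
lemma mat_eq (A : Matrix (Fin 2) (Fin 2) ℂ) (l : ℂ) :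
    (Matrix.reindex finSumFinEquiv finSumFinEquiv
      (Matrix.fromBlocks A (l • Uᴴ) (l • U) A) : Matrix (Fin 4) (Fin 4) ℂ)
    = !![A 0 0, A 0 1, l * star eta, 0;
         A 1 0, A 1 1, 0, l * eta;
         l * eta, 0, A 0 0, A 0 1;
         0, l * star eta, A 1 0, A 1 1] := by
  have h0 : ((finSumFinEquiv (m := 2) (n := 2)).symm 0 : Fin 2 ⊕ Fin 2) = Sum.inl 0 := by decide
  have h1 : ((finSumFinEquiv (m := 2) (n := 2)).symm 1 : Fin 2 ⊕ Fin 2) = Sum.inl 1 := by decide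
  have h2 : ((finSumFinEquiv (m := 2) (n := 2)).symm 2 : Fin 2 ⊕ Fin 2) = Sum.inr 0 := by decide
  have h3 : ((finSumFinEquiv (m := 2) (n := 2)).symm 3 : Fin 2 ⊕ Fin 2) = Sum.inr 1 := by decide
  ext i j
  fin_cases i <;> fin_cases j <;>
    simp [h0, h1, h2, h3, U, Matrix.fromBlocks, conjTranspose_apply]

set_option maxHeartbeats 1000000 in
/-- For every t ∈ [0, 2π) and all M₁, M₂ ∈ L₀, ⟨ψ_t, (M₁ ⊗ M₂)φ_t⟩ = 0. -/
theorem psi_inner_kron_phi_eq_zero (t : ℝ) (ht : t ∈ Set.Ico 0 (2 * π))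
    (M₁ M₂ : Matrix (Fin 4) (Fin 4) ℂ) (hM₁ : M₁ ∈ L0) (hM₂ : M₂ ∈ L0) :
    star (psiT t) ⬝ᵥ (M₁ ⊗ₖ M₂).mulVec (phiT t) = 0 := by
  obtain ⟨A₁, l₁, h₁⟩ := hM₁
  obtain ⟨A₂, l₂, h₂⟩ := hM₂
  have h₁' : M₁ = !![A₁ 0 0, A₁ 0 1, l₁ * star eta, 0;
         A₁ 1 0, A₁ 1 1, 0, l₁ * eta;
         l₁ * eta, 0, A₁ 0 0, A₁ 0 1;
         0, l₁ * star eta, A₁ 1 0, A₁ 1 1] := by rw [h₁]; exact mat_eq A₁ l₁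
  have h₂' : M₂ = !![A₂ 0 0, A₂ 0 1, l₂ * star eta, 0;
         A₂ 1 0, A₂ 1 1, 0, l₂ * eta;
         l₂ * eta, 0, A₂ 0 0, A₂ 0 1;
         0, l₂ * star eta, A₂ 1 0, A₂ 1 1] := by rw [h₂]; exact mat_eq A₂ l₂
  rw [h₁', h₂']
  simp only [dotProduct, mulVec, Fintype.sum_prod_type, Fin.sum_univ_four,
    kroneckerMap_apply, phiT, psiT, Pi.star_apply, Prod.mk.injEq]
  simp
  have he : (starRingEnd ℂ) (Complex.exp (↑t * Complex.I)) * Complex.exp (↑t * Complex.I) = 1 := by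
    rw [← Complex.exp_conj, ← Complex.exp_add]
    simp [_root_.map_mul, Complex.conj_I, Complex.conj_ofReal]
  have h2 : ((Real.sqrt 2 : ℝ) : ℂ) * ((Real.sqrt 2 : ℝ) : ℂ) = 2 := by
    norm_cast
    exact Real.mul_self_sqrt (by norm_num)
  have hs : ((Real.sqrt 2 : ℝ) : ℂ) ≠ 0 := by
    intro h
    rw [h] at h2
    norm_num at h2
  field_simp
  linear_combination (l₁ * l₂) * eta_key +
    (l₁ * l₂ * (starRingEnd ℂ) eta * (starRingEnd ℂ) eta) * he
end

section
/- For every natural number n ≥ 2, there do not exist unit vectors φ, ψ ∈ ℂ^{2n} such that ⟨ψ, Mφ⟩ = 0 and ⟨φ, Mφ⟩ = ⟨ψ, Mψ⟩ for every matrix M ∈ L_n. -/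
open Matrix

/-- L_n ⊂ M_{2n}(ℂ): n×n block matrices (ℂ^{2n} being identified with n copies of ℂ²)
whose diagonal 2×2 blocks all equal a common A ∈ M₂(ℂ), whose (i,j) block is
λ_{ij}U* for i < j and λ_{ij}U for i > j. -/
noncomputable def Ln (n : ℕ) : Set (Matrix (Fin n × Fin 2) (Fin n × Fin 2) ℂ) :=
  {M | ∃ (A : Matrix (Fin 2) (Fin 2) ℂ) (lam : Fin n → Fin n → ℂ),
    ∀ (i j : Fin n) (a b : Fin 2),
      M (i, a) (j, b) =
        if i = j then A a b
        else if (i : ℕ) < (j : ℕ) then lam i j * Uᴴ a b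
        else lam i j * U a b}

/-! ### Auxiliary facts about η -/

lemma eta_re_pos : 0 < eta.re := by
  unfold eta
  rw [show ((Real.pi:ℂ) / 4 * Complex.I) = ((Real.pi/4 : ℝ):ℂ) * Complex.I by push_cast; ring]
  rw [Complex.exp_ofReal_mul_I_re]
  exact Real.cos_pos_of_mem_Ioo (by constructor <;> nlinarith [Real.pi_pos, Real.pi_lt_d2])

lemma conj_eta_re : ((starRingEnd ℂ) eta).re = eta.re := Complex.conj_re eta

lemma eta_mul_eta : eta * eta = Complex.I := by
  unfold eta
  rw [← Complex.exp_add]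
  rw [show ((Real.pi:ℂ) / 4 * Complex.I + (Real.pi:ℂ) / 4 * Complex.I)
      = ((Real.pi/2 : ℝ):ℂ) * Complex.I by push_cast; ring]
  rw [Complex.exp_mul_I]
  push_cast
  simp [Real.cos_pi_div_two, Real.sin_pi_div_two]

lemma conj_eta_mul_conj_eta : (starRingEnd ℂ) eta * (starRingEnd ℂ) eta = -Complex.I := by
  rw [← _root_.map_mul, eta_mul_eta, Complex.conj_I]

lemma eta_ne_zero : eta ≠ 0 := Complex.exp_ne_zero _

lemma conj_eta_ne_zero : (starRingEnd ℂ) eta ≠ 0 := by simpa using eta_ne_zero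

/-! ### Elementary complex-linear-algebra lemmas -/

lemma conj_mul_self_eq_zero {z : ℂ} (h : (starRingEnd ℂ) z * z = 0) : z = 0 := by
  rcases mul_eq_zero.mp h with h | h
  · simpa using h
  · exact h

lemma pos2 {c d z w : ℂ} (hc : 0 < c.re) (hd : 0 < d.re)
    (h : c * ((starRingEnd ℂ) z * z) + d * ((starRingEnd ℂ) w * w) = 0) : z = 0 ∧ w = 0 := by
  have hz : (starRingEnd ℂ) z * z = (Complex.normSq z : ℂ) := by
    rw [mul_comm, Complex.mul_conj]
  have hw : (starRingEnd ℂ) w * w = (Complex.normSq w : ℂ) := by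
    rw [mul_comm, Complex.mul_conj]
  rw [hz, hw] at h
  have hre := congrArg Complex.re h
  simp [Complex.add_re, Complex.mul_re] at hre
  have h1 : Complex.normSq z = 0 := by
    nlinarith [Complex.normSq_nonneg z, Complex.normSq_nonneg w]
  have h2 : Complex.normSq w = 0 := by
    nlinarith [Complex.normSq_nonneg z, Complex.normSq_nonneg w]
  exact ⟨Complex.normSq_eq_zero.mp h1, Complex.normSq_eq_zero.mp h2⟩

lemma solve2 {a b c d x y : ℂ} (h1 : a*x + b*y = 0) (h2 : c*x + d*y = 0)
    (hdet : a*d - b*c ≠ 0) : x = 0 ∧ y = 0 := by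
  constructor
  · have : (a*d - b*c) * x = 0 := by linear_combination d * h1 - b * h2
    exact (mul_eq_zero.mp this).resolve_left hdet
  · have : (a*d - b*c) * y = 0 := by linear_combination a * h2 - c * h1
    exact (mul_eq_zero.mp this).resolve_left hdet

lemma prop2 {a b c d : ℂ} (hcd : ¬(c = 0 ∧ d = 0)) (h : a*d = b*c) :
    ∃ κ : ℂ, a = κ*c ∧ b = κ*d := by
  by_cases hc : c = 0
  · have hd : d ≠ 0 := fun h' => hcd ⟨hc, h'⟩
    refine ⟨b/d, ?_, by field_simp⟩
    have ha : a = 0 := by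
      have h2 : a * d = 0 := by rw [h, hc, mul_zero]
      exact (mul_eq_zero.mp h2).resolve_right hd
    rw [ha, hc, mul_zero]
  · refine ⟨a/c, by field_simp, ?_⟩
    field_simp
    linear_combination -h

lemma one_add_conj_mul_ne (α : ℂ) : (1 : ℂ) + (starRingEnd ℂ) α * α ≠ 0 := by
  have h : (starRingEnd ℂ) α * α = (Complex.normSq α : ℂ) := by rw [mul_comm, Complex.mul_conj]
  rw [h, show (1:ℂ) + (Complex.normSq α : ℂ) = ((1 + Complex.normSq α : ℝ) : ℂ) by push_cast; ring,
    Complex.ofReal_ne_zero]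
  exact ne_of_gt (by nlinarith [Complex.normSq_nonneg α])

/-! ### The transfer lemma -/

lemma transfer {n : ℕ} (f g : Fin n → Fin 2 → ℂ)
    (hfg : ∀ a b : Fin 2, ∑ i, (starRingEnd ℂ) (f i a) * f i b
      = ∑ i, (starRingEnd ℂ) (g i a) * g i b)
    (c0 c1 : ℂ) (h : ∀ i, c0 * g i 0 + c1 * g i 1 = 0) :
    ∀ i, c0 * f i 0 + c1 * f i 1 = 0 := by
  have expand : ∀ u : Fin n → Fin 2 → ℂ,
      ∑ i, (c0 * u i 0 + c1 * u i 1) * (starRingEnd ℂ) (c0 * u i 0 + c1 * u i 1)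
      = c0 * (starRingEnd ℂ) c0 * ∑ i, u i 0 * (starRingEnd ℂ) (u i 0)
      + c0 * (starRingEnd ℂ) c1 * ∑ i, u i 0 * (starRingEnd ℂ) (u i 1)
      + c1 * (starRingEnd ℂ) c0 * ∑ i, u i 1 * (starRingEnd ℂ) (u i 0)
      + c1 * (starRingEnd ℂ) c1 * ∑ i, u i 1 * (starRingEnd ℂ) (u i 1) := by
    intro u
    simp only [Finset.mul_sum]
    rw [← Finset.sum_add_distrib, ← Finset.sum_add_distrib, ← Finset.sum_add_distrib]
    refine Finset.sum_congr rfl fun i _ => ?_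
    simp only [map_add, _root_.map_mul]
    ring
  have hconj : ∀ a b : Fin 2, ∑ i, f i a * (starRingEnd ℂ) (f i b)
      = ∑ i, g i a * (starRingEnd ℂ) (g i b) := by
    intro a b
    have h2 := congrArg (starRingEnd ℂ) (hfg a b)
    simpa only [map_sum, _root_.map_mul, Complex.conj_conj] using h2
  have key : ∑ i, (c0 * f i 0 + c1 * f i 1) * (starRingEnd ℂ) (c0 * f i 0 + c1 * f i 1)
      = ∑ i, (c0 * g i 0 + c1 * g i 1) * (starRingEnd ℂ) (c0 * g i 0 + c1 * g i 1) := by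
    rw [expand f, expand g, hconj 0 0, hconj 0 1, hconj 1 0, hconj 1 1]
  have hg0 : ∑ i, (c0 * g i 0 + c1 * g i 1) * (starRingEnd ℂ) (c0 * g i 0 + c1 * g i 1) = 0 :=
    Finset.sum_eq_zero fun i _ => by rw [h i, zero_mul]
  rw [hg0] at key
  have hr : ∑ i, Complex.normSq (c0 * f i 0 + c1 * f i 1) = 0 := by
    have h3 : ∑ i, ((Complex.normSq (c0 * f i 0 + c1 * f i 1) : ℂ)) = 0 := by
      rw [← key]
      exact Finset.sum_congr rfl fun i _ => (Complex.mul_conj _).symm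
    exact_mod_cast h3
  intro i
  have h4 := (Finset.sum_eq_zero_iff_of_nonneg
    (fun i _ => Complex.normSq_nonneg _)).mp hr i (Finset.mem_univ i)
  exact Complex.normSq_eq_zero.mp h4

lemma kill {n : ℕ} (f g : Fin n → Fin 2 → ℂ)
    (hfg : ∀ a b : Fin 2, ∑ i, (starRingEnd ℂ) (f i a) * f i b
      = ∑ i, (starRingEnd ℂ) (g i a) * g i b)
    (k : Fin n)
    (h : ∀ i, eta * (starRingEnd ℂ) (f k 0) * g i 0
      + (starRingEnd ℂ) eta * (starRingEnd ℂ) (f k 1) * g i 1 = 0) :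
    f k 0 = 0 ∧ f k 1 = 0 := by
  have h2 := transfer f g hfg _ _ h k
  exact pos2 (c := eta) (d := (starRingEnd ℂ) eta) eta_re_pos
    (by rw [conj_eta_re]; exact eta_re_pos) (by linear_combination h2)

lemma kill' {n : ℕ} (f g : Fin n → Fin 2 → ℂ)
    (hfg : ∀ a b : Fin 2, ∑ i, (starRingEnd ℂ) (f i a) * f i b
      = ∑ i, (starRingEnd ℂ) (g i a) * g i b)
    (k : Fin n)
    (h : ∀ i, (starRingEnd ℂ) eta * (starRingEnd ℂ) (f k 0) * g i 0
      + eta * (starRingEnd ℂ) (f k 1) * g i 1 = 0) :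
    f k 0 = 0 ∧ f k 1 = 0 := by
  have h2 := transfer f g hfg _ _ h k
  exact pos2 (c := (starRingEnd ℂ) eta) (d := eta)
    (by rw [conj_eta_re]; exact eta_re_pos) eta_re_pos (by linear_combination h2)

/-! ### Support extrema -/

lemma exists_max_support {n : ℕ} (f : Fin n × Fin 2 → ℂ) (hex : ∃ p, f p ≠ 0) :
    ∃ k : Fin n, (f (k,0) ≠ 0 ∨ f (k,1) ≠ 0) ∧ ∀ i, k < i → f (i,0) = 0 ∧ f (i,1) = 0 := by
  classical
  set S := Finset.univ.filter (fun i : Fin n => f (i,0) ≠ 0 ∨ f (i,1) ≠ 0) with hS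
  have hne : S.Nonempty := by
    obtain ⟨⟨i, a⟩, hp⟩ := hex
    refine ⟨i, ?_⟩
    simp only [hS, Finset.mem_filter, Finset.mem_univ, true_and]
    fin_cases a
    · exact Or.inl hp
    · exact Or.inr hp
  refine ⟨S.max' hne, ?_, ?_⟩
  · have := S.max'_mem hne
    simpa only [hS, Finset.mem_filter, Finset.mem_univ, true_and] using this
  · intro i hi
    by_contra hc
    have hmem : i ∈ S := by
      simp only [hS, Finset.mem_filter, Finset.mem_univ, true_and]
      tauto
    exact absurd (S.le_max' i hmem) (not_le.2 hi)

lemma exists_min_support {n : ℕ} (f : Fin n × Fin 2 → ℂ) (hex : ∃ p, f p ≠ 0) :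
    ∃ l : Fin n, (f (l,0) ≠ 0 ∨ f (l,1) ≠ 0) ∧ ∀ i, i < l → f (i,0) = 0 ∧ f (i,1) = 0 := by
  classical
  set S := Finset.univ.filter (fun i : Fin n => f (i,0) ≠ 0 ∨ f (i,1) ≠ 0) with hS
  have hne : S.Nonempty := by
    obtain ⟨⟨i, a⟩, hp⟩ := hex
    refine ⟨i, ?_⟩
    simp only [hS, Finset.mem_filter, Finset.mem_univ, true_and]
    fin_cases a
    · exact Or.inl hp
    · exact Or.inr hp
  refine ⟨S.min' hne, ?_, ?_⟩
  · have := S.min'_mem hne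
    simpa only [hS, Finset.mem_filter, Finset.mem_univ, true_and] using this
  · intro i hi
    by_contra hc
    have hmem : i ∈ S := by
      simp only [hS, Finset.mem_filter, Finset.mem_univ, true_and]
      tauto
    exact absurd (S.min'_le i hmem) (not_le.2 hi)

lemma exists_ne_zero_of_dot {n : ℕ} (f : Fin n × Fin 2 → ℂ) (h : star f ⬝ᵥ f = 1) :
    ∃ p, f p ≠ 0 := by
  by_contra hc
  push_neg at hc
  have h0 : star f ⬝ᵥ f = 0 := by simp [dotProduct, hc]
  rw [h0] at h
  exact zero_ne_one h

/-! ### Specific matrices in `Ln` and the associated sesquilinear forms -/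

lemma mem_diag (n : ℕ) (a0 b0 : Fin 2) :
    (Matrix.of fun (p q : Fin n × Fin 2) =>
      if p.1 = q.1 ∧ p.2 = a0 ∧ q.2 = b0 then (1:ℂ) else 0) ∈ Ln n := by
  refine ⟨Matrix.of fun a b => if a = a0 ∧ b = b0 then 1 else 0, 0, fun i j a b => ?_⟩
  simp only [of_apply, Pi.zero_apply, zero_mul]
  by_cases h : i = j <;> simp [h, ite_and]

lemma mem_up (n : ℕ) (i0 j0 : Fin n) (h : (i0:ℕ) < (j0:ℕ)) :
    (Matrix.of fun (p q : Fin n × Fin 2) =>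
      if p.1 = i0 ∧ q.1 = j0 then Uᴴ p.2 q.2 else 0) ∈ Ln n := by
  refine ⟨0, fun i j => if i = i0 ∧ j = j0 then 1 else 0, fun i j a b => ?_⟩
  simp only [of_apply, Matrix.zero_apply]
  by_cases hij : i = i0 ∧ j = j0
  · obtain ⟨rfl, rfl⟩ := hij
    have hne : ¬ i = j := fun e => absurd (congrArg Fin.val e) (Nat.ne_of_lt h)
    simp [hne, h]
  · simp only [hij, if_false, zero_mul]
    split <;> [rfl; (split <;> rfl)]

lemma mem_down (n : ℕ) (i0 j0 : Fin n) (h : (j0:ℕ) < (i0:ℕ)) :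
    (Matrix.of fun (p q : Fin n × Fin 2) =>
      if p.1 = i0 ∧ q.1 = j0 then U p.2 q.2 else 0) ∈ Ln n := by
  refine ⟨0, fun i j => if i = i0 ∧ j = j0 then 1 else 0, fun i j a b => ?_⟩
  simp only [of_apply, Matrix.zero_apply]
  by_cases hij : i = i0 ∧ j = j0
  · obtain ⟨rfl, rfl⟩ := hij
    have hne : ¬ i = j := fun e => absurd (congrArg Fin.val e) (Nat.ne_of_gt h)
    simp [hne, h, Nat.not_lt_of_gt h]
  · simp only [hij, if_false, zero_mul]
    split <;> [rfl; (split <;> rfl)]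

lemma dot_diag {n : ℕ} (v w : Fin n × Fin 2 → ℂ) (a0 b0 : Fin 2) :
    star v ⬝ᵥ (Matrix.of fun (p q : Fin n × Fin 2) =>
      if p.1 = q.1 ∧ p.2 = a0 ∧ q.2 = b0 then (1:ℂ) else 0).mulVec w
    = ∑ i : Fin n, (starRingEnd ℂ) (v (i, a0)) * w (i, b0) := by
  simp only [dotProduct, mulVec, Pi.star_apply, of_apply, Fintype.sum_prod_type]
  simp [ite_and, Finset.mul_sum, mul_ite, mul_zero, mul_one]

lemma dot_up {n : ℕ} (v w : Fin n × Fin 2 → ℂ) (i0 j0 : Fin n) :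
    star v ⬝ᵥ (Matrix.of fun (p q : Fin n × Fin 2) =>
      if p.1 = i0 ∧ q.1 = j0 then Uᴴ p.2 q.2 else 0).mulVec w
    = (starRingEnd ℂ) (v (i0, 0)) * ((starRingEnd ℂ) eta * w (j0, 0))
      + (starRingEnd ℂ) (v (i0, 1)) * (eta * w (j0, 1)) := by
  simp only [dotProduct, mulVec, Pi.star_apply, of_apply, Fintype.sum_prod_type]
  simp [ite_and, Finset.mul_sum, mul_ite, mul_zero, U, conjTranspose_apply, Fin.sum_univ_two]

lemma dot_down {n : ℕ} (v w : Fin n × Fin 2 → ℂ) (i0 j0 : Fin n) :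
    star v ⬝ᵥ (Matrix.of fun (p q : Fin n × Fin 2) =>
      if p.1 = i0 ∧ q.1 = j0 then U p.2 q.2 else 0).mulVec w
    = (starRingEnd ℂ) (v (i0, 0)) * (eta * w (j0, 0))
      + (starRingEnd ℂ) (v (i0, 1)) * ((starRingEnd ℂ) eta * w (j0, 1)) := by
  simp only [dotProduct, mulVec, Pi.star_apply, of_apply, Fintype.sum_prod_type]
  simp [ite_and, Finset.mul_sum, mul_ite, mul_zero, U, Fin.sum_univ_two]

/-- For every n ≥ 2, there do not exist unit vectors φ, ψ ∈ ℂ^{2n} such that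
⟨ψ, Mφ⟩ = 0 and ⟨φ, Mφ⟩ = ⟨ψ, Mψ⟩ for every M ∈ L_n. -/
theorem no_superactivating_pair_for_Ln (n : ℕ) (hn : 2 ≤ n) :
    ¬ ∃ (φ ψ : Fin n × Fin 2 → ℂ), star φ ⬝ᵥ φ = 1 ∧ star ψ ⬝ᵥ ψ = 1 ∧
      ∀ M ∈ Ln n, star ψ ⬝ᵥ M.mulVec φ = 0 ∧
        star φ ⬝ᵥ M.mulVec φ = star ψ ⬝ᵥ M.mulVec ψ := by
  classical
  rintro ⟨φ, ψ, hφn, hψn, h⟩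
  -- scalar consequences
  have hC1 : ∀ a b : Fin 2, ∑ i : Fin n, (starRingEnd ℂ) (ψ (i,a)) * φ (i,b) = 0 := by
    intro a b
    have h' := (h _ (mem_diag n a b)).1
    rwa [dot_diag] at h'
  have hC2 : ∀ a b : Fin 2, ∑ i : Fin n, (starRingEnd ℂ) (φ (i,a)) * φ (i,b)
      = ∑ i : Fin n, (starRingEnd ℂ) (ψ (i,a)) * ψ (i,b) := by
    intro a b
    have h' := (h _ (mem_diag n a b)).2
    rwa [dot_diag, dot_diag] at h'
  have hC3 : ∀ i j : Fin n, i < j →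
      (starRingEnd ℂ) (ψ (i,0)) * ((starRingEnd ℂ) eta * φ (j,0))
        + (starRingEnd ℂ) (ψ (i,1)) * (eta * φ (j,1)) = 0 := by
    intro i j hij
    have h' := (h _ (mem_up n i j hij)).1
    rwa [dot_up] at h'
  have hC4 : ∀ i j : Fin n, j < i →
      (starRingEnd ℂ) (ψ (i,0)) * (eta * φ (j,0))
        + (starRingEnd ℂ) (ψ (i,1)) * ((starRingEnd ℂ) eta * φ (j,1)) = 0 := by
    intro i j hij
    have h' := (h _ (mem_down n i j hij)).1
    rwa [dot_down] at h'
  have hC2f : ∀ a b : Fin 2,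
      ∑ i : Fin n, (starRingEnd ℂ) ((fun i a => φ (i,a)) i a) * (fun i a => φ (i,a)) i b
      = ∑ i : Fin n, (starRingEnd ℂ) ((fun i a => ψ (i,a)) i a) * (fun i a => ψ (i,a)) i b :=
    fun a b => hC2 a b
  have hC2f' : ∀ a b : Fin 2,
      ∑ i : Fin n, (starRingEnd ℂ) ((fun i a => ψ (i,a)) i a) * (fun i a => ψ (i,a)) i b
      = ∑ i : Fin n, (starRingEnd ℂ) ((fun i a => φ (i,a)) i a) * (fun i a => φ (i,a)) i b :=
    fun a b => (hC2 a b).symm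
  -- support extrema
  obtain ⟨kf, hkf_ne, hkf_top⟩ := exists_max_support φ (exists_ne_zero_of_dot φ hφn)
  obtain ⟨lf, hlf_ne, hlf_bot⟩ := exists_min_support φ (exists_ne_zero_of_dot φ hφn)
  obtain ⟨ks, hks_ne, hks_top⟩ := exists_max_support ψ (exists_ne_zero_of_dot ψ hψn)
  obtain ⟨ls, hls_ne, hls_bot⟩ := exists_min_support ψ (exists_ne_zero_of_dot ψ hψn)
  -- maxima agree
  have hk : kf = ks := by
    rcases lt_trichotomy kf ks with hlt | hEq | hgt
    · have H : ∀ i, eta * (starRingEnd ℂ) (ψ (ks,0)) * φ (i,0)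
          + (starRingEnd ℂ) eta * (starRingEnd ℂ) (ψ (ks,1)) * φ (i,1) = 0 := by
        intro i
        rcases lt_or_ge i ks with hi | hi
        · linear_combination hC4 ks i hi
        · have hz := hkf_top i (lt_of_lt_of_le hlt hi)
          rw [hz.1, hz.2]; ring
      have hz := kill (fun i a => ψ (i,a)) (fun i a => φ (i,a)) hC2f' ks H
      exact (hks_ne.elim (fun h' => absurd hz.1 h') (fun h' => absurd hz.2 h'))
    · exact hEq
    · have H : ∀ i, eta * (starRingEnd ℂ) (φ (kf,0)) * ψ (i,0)
          + (starRingEnd ℂ) eta * (starRingEnd ℂ) (φ (kf,1)) * ψ (i,1) = 0 := by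
        intro i
        rcases lt_or_ge i kf with hi | hi
        · have e := congrArg (starRingEnd ℂ) (hC3 i kf hi)
          simp only [map_add, _root_.map_mul, Complex.conj_conj, map_zero] at e
          linear_combination e
        · have hz := hks_top i (lt_of_lt_of_le hgt hi)
          rw [hz.1, hz.2]; ring
      have hz := kill (fun i a => φ (i,a)) (fun i a => ψ (i,a)) hC2f kf H
      exact (hkf_ne.elim (fun h' => absurd hz.1 h') (fun h' => absurd hz.2 h'))
  -- minima agree
  have hl : lf = ls := by
    rcases lt_trichotomy lf ls with hlt | hEq | hgt
    · have H : ∀ i, (starRingEnd ℂ) eta * (starRingEnd ℂ) (φ (lf,0)) * ψ (i,0)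
          + eta * (starRingEnd ℂ) (φ (lf,1)) * ψ (i,1) = 0 := by
        intro i
        rcases lt_or_ge lf i with hi | hi
        · have e := congrArg (starRingEnd ℂ) (hC4 i lf hi)
          simp only [map_add, _root_.map_mul, Complex.conj_conj, map_zero] at e
          linear_combination e
        · have hz := hls_bot i (lt_of_le_of_lt hi hlt)
          rw [hz.1, hz.2]; ring
      have hz := kill' (fun i a => φ (i,a)) (fun i a => ψ (i,a)) hC2f lf H
      exact (hlf_ne.elim (fun h' => absurd hz.1 h') (fun h' => absurd hz.2 h'))
    · exact hEq
    · have H : ∀ j, (starRingEnd ℂ) eta * (starRingEnd ℂ) (ψ (ls,0)) * φ (j,0)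
          + eta * (starRingEnd ℂ) (ψ (ls,1)) * φ (j,1) = 0 := by
        intro j
        rcases lt_or_ge ls j with hj | hj
        · linear_combination hC3 ls j hj
        · have hz := hlf_bot j (lt_of_le_of_lt hj hgt)
          rw [hz.1, hz.2]; ring
      have hz := kill' (fun i a => ψ (i,a)) (fun i a => φ (i,a)) hC2f' ls H
      exact (hls_ne.elim (fun h' => absurd hz.1 h') (fun h' => absurd hz.2 h'))
  subst hk
  subst hl
  -- now kf is also the top of ψ's support, lf the bottom
  have hlk_le : lf ≤ kf := by
    by_contra hc
    push_neg at hc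
    have hz := hlf_bot kf hc
    exact (hkf_ne.elim (fun h' => absurd hz.1 h') (fun h' => absurd hz.2 h'))
  rcases eq_or_lt_of_le hlk_le with hEq | hlk
  · -- single-index case
    have hzs : ∀ i, i ≠ kf → ∀ a, ψ (i,a) = 0 := by
      intro i hi a
      rcases lt_or_gt_of_ne hi with hi' | hi'
      · have := hls_bot i (by rw [hEq]; exact hi')
        fin_cases a
        · exact this.1
        · exact this.2
      · have := hks_top i hi'
        fin_cases a
        · exact this.1
        · exact this.2
    obtain ⟨b0, hb0⟩ : ∃ b, φ (kf, b) ≠ 0 := by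
      rcases hkf_ne with h'|h'
      exacts [⟨0, h'⟩, ⟨1, h'⟩]
    have hcol : ∀ a, (starRingEnd ℂ) (ψ (kf,a)) * φ (kf,b0) = 0 := by
      intro a
      have hsum := hC1 a b0
      rwa [Finset.sum_eq_single kf
        (fun i _ hi => by rw [hzs i hi a, map_zero, zero_mul])
        (fun hk => absurd (Finset.mem_univ kf) hk)] at hsum
    have hψk0 : ∀ a, ψ (kf,a) = 0 := by
      intro a
      rcases mul_eq_zero.mp (hcol a) with h'|h'
      · simpa using h'
      · exact absurd h' hb0
    exact hks_ne.elim (fun h' => h' (hψk0 0)) (fun h' => h' (hψk0 1))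
  -- main case : lf < kf
  by_cases hDφ : φ (kf,0) * φ (lf,1) + φ (kf,1) * φ (lf,0) = 0
  · -- φ_k, φ_l "parallel" after twisting: contradiction
    have had : ((starRingEnd ℂ) eta * φ (kf,0)) * ((starRingEnd ℂ) eta * φ (lf,1))
        = (eta * φ (kf,1)) * (eta * φ (lf,0)) := by
      linear_combination (φ (kf,0) * φ (lf,1)) * conj_eta_mul_conj_eta
        - (φ (kf,1) * φ (lf,0)) * eta_mul_eta - Complex.I * hDφ
    have hcd : ¬(eta * φ (lf,0) = 0 ∧ (starRingEnd ℂ) eta * φ (lf,1) = 0) := by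
      rintro ⟨h1, h2⟩
      have e1 := (mul_eq_zero.mp h1).resolve_left eta_ne_zero
      have e2 := (mul_eq_zero.mp h2).resolve_left conj_eta_ne_zero
      exact hlf_ne.elim (fun h' => h' e1) (fun h' => h' e2)
    obtain ⟨κ, hκ1, hκ2⟩ := prop2 hcd had
    have H : ∀ i, eta * (starRingEnd ℂ) (φ (kf,0)) * ψ (i,0)
        + (starRingEnd ℂ) eta * (starRingEnd ℂ) (φ (kf,1)) * ψ (i,1) = 0 := by
      intro i
      have Hx : ((starRingEnd ℂ) eta * φ (kf,0)) * (starRingEnd ℂ) (ψ (i,0))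
          + (eta * φ (kf,1)) * (starRingEnd ℂ) (ψ (i,1)) = 0 := by
        rcases lt_trichotomy i kf with hi | hi | hi
        · linear_combination hC3 i kf hi
        · rw [hi]
          linear_combination κ * (hC4 kf lf hlk)
            + (starRingEnd ℂ) (ψ (kf,0)) * hκ1 + (starRingEnd ℂ) (ψ (kf,1)) * hκ2
        · have hz := hks_top i hi
          rw [hz.1, hz.2, map_zero]; ring
      have e := congrArg (starRingEnd ℂ) Hx
      simp only [map_add, _root_.map_mul, Complex.conj_conj, map_zero] at e
      linear_combination e
    have hz := kill (fun i a => φ (i,a)) (fun i a => ψ (i,a)) hC2f kf H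
    exact (hkf_ne.elim (fun h' => absurd hz.1 h') (fun h' => absurd hz.2 h'))
  by_cases hDψ : ψ (kf,0) * ψ (lf,1) + ψ (kf,1) * ψ (lf,0) = 0
  · -- ψ_k, ψ_l "parallel": contradiction
    have hDψc : (starRingEnd ℂ) (ψ (kf,0)) * (starRingEnd ℂ) (ψ (lf,1))
        + (starRingEnd ℂ) (ψ (kf,1)) * (starRingEnd ℂ) (ψ (lf,0)) = 0 := by
      have h2 := congrArg (starRingEnd ℂ) hDψ
      simpa only [map_add, _root_.map_mul, map_zero] using h2
    have had : ((starRingEnd ℂ) eta * (starRingEnd ℂ) (ψ (lf,0)))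
          * ((starRingEnd ℂ) eta * (starRingEnd ℂ) (ψ (kf,1)))
        = (eta * (starRingEnd ℂ) (ψ (lf,1))) * (eta * (starRingEnd ℂ) (ψ (kf,0))) := by
      linear_combination ((starRingEnd ℂ) (ψ (lf,0)) * (starRingEnd ℂ) (ψ (kf,1)))
          * conj_eta_mul_conj_eta
        - ((starRingEnd ℂ) (ψ (lf,1)) * (starRingEnd ℂ) (ψ (kf,0))) * eta_mul_eta
        - Complex.I * hDψc
    have hcd : ¬(eta * (starRingEnd ℂ) (ψ (kf,0)) = 0
        ∧ (starRingEnd ℂ) eta * (starRingEnd ℂ) (ψ (kf,1)) = 0) := by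
      rintro ⟨h1, h2⟩
      have e1 := (mul_eq_zero.mp h1).resolve_left eta_ne_zero
      have e2 := (mul_eq_zero.mp h2).resolve_left conj_eta_ne_zero
      refine hks_ne.elim (fun h' => h' ?_) (fun h' => h' ?_)
      · simpa using e1
      · simpa using e2
    obtain ⟨κ, hκ1, hκ2⟩ := prop2 hcd had
    have H : ∀ j, (starRingEnd ℂ) eta * (starRingEnd ℂ) (ψ (lf,0)) * φ (j,0)
        + eta * (starRingEnd ℂ) (ψ (lf,1)) * φ (j,1) = 0 := by
      intro j
      rcases lt_trichotomy lf j with hj | hj | hj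
      · linear_combination hC3 lf j hj
      · rw [← hj]
        linear_combination κ * (hC4 kf lf hlk) + φ (lf,0) * hκ1 + φ (lf,1) * hκ2
      · have hz := hlf_bot j hj
        rw [hz.1, hz.2]; ring
    have hz := kill' (fun i a => ψ (i,a)) (fun i a => φ (i,a)) hC2f' lf H
    exact (hls_ne.elim (fun h' => absurd hz.1 h') (fun h' => absurd hz.2 h'))
  -- both "determinants" nonzero: middle components vanish
  have hmidψ : ∀ i, lf < i → i < kf → ψ (i,0) = 0 ∧ ψ (i,1) = 0 := by
    intro i h1 h2
    have e1 : ((starRingEnd ℂ) eta * φ (kf,0)) * (starRingEnd ℂ) (ψ (i,0))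
        + (eta * φ (kf,1)) * (starRingEnd ℂ) (ψ (i,1)) = 0 := by
      linear_combination hC3 i kf h2
    have e2 : (eta * φ (lf,0)) * (starRingEnd ℂ) (ψ (i,0))
        + ((starRingEnd ℂ) eta * φ (lf,1)) * (starRingEnd ℂ) (ψ (i,1)) = 0 := by
      linear_combination hC4 i lf h1
    have hdet : ((starRingEnd ℂ) eta * φ (kf,0)) * ((starRingEnd ℂ) eta * φ (lf,1))
        - (eta * φ (kf,1)) * (eta * φ (lf,0)) ≠ 0 := by
      intro hc
      apply hDφ
      have h3 : -Complex.I * (φ (kf,0) * φ (lf,1) + φ (kf,1) * φ (lf,0)) = 0 := by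
        linear_combination hc - (φ (kf,0) * φ (lf,1)) * conj_eta_mul_conj_eta
          + (φ (kf,1) * φ (lf,0)) * eta_mul_eta
      exact (mul_eq_zero.mp h3).resolve_left (by simpa using Complex.I_ne_zero)
    obtain ⟨hx, hy⟩ := solve2 e1 e2 hdet
    constructor
    · simpa using hx
    · simpa using hy
  have hmidφ : ∀ j, lf < j → j < kf → φ (j,0) = 0 ∧ φ (j,1) = 0 := by
    intro j h1 h2
    have e1 : ((starRingEnd ℂ) eta * (starRingEnd ℂ) (ψ (lf,0))) * φ (j,0)
        + (eta * (starRingEnd ℂ) (ψ (lf,1))) * φ (j,1) = 0 := by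
      linear_combination hC3 lf j h1
    have e2 : (eta * (starRingEnd ℂ) (ψ (kf,0))) * φ (j,0)
        + ((starRingEnd ℂ) eta * (starRingEnd ℂ) (ψ (kf,1))) * φ (j,1) = 0 := by
      linear_combination hC4 kf j h2
    have hdet : ((starRingEnd ℂ) eta * (starRingEnd ℂ) (ψ (lf,0)))
          * ((starRingEnd ℂ) eta * (starRingEnd ℂ) (ψ (kf,1)))
        - (eta * (starRingEnd ℂ) (ψ (lf,1))) * (eta * (starRingEnd ℂ) (ψ (kf,0))) ≠ 0 := by
      intro hc
      apply hDψ
      have h3 : -Complex.I * ((starRingEnd ℂ) (ψ (kf,0)) * (starRingEnd ℂ) (ψ (lf,1))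
          + (starRingEnd ℂ) (ψ (kf,1)) * (starRingEnd ℂ) (ψ (lf,0))) = 0 := by
        linear_combination hc
          - ((starRingEnd ℂ) (ψ (lf,0)) * (starRingEnd ℂ) (ψ (kf,1))) * conj_eta_mul_conj_eta
          + ((starRingEnd ℂ) (ψ (lf,1)) * (starRingEnd ℂ) (ψ (kf,0))) * eta_mul_eta
      have h4 := (mul_eq_zero.mp h3).resolve_left (by simpa using Complex.I_ne_zero)
      have h5 := congrArg (starRingEnd ℂ) h4
      simpa only [map_add, _root_.map_mul, Complex.conj_conj, map_zero] using h5
    exact solve2 e1 e2 hdet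
  -- collapse the sums onto the indices lf and kf
  have hne_lk : lf ≠ kf := ne_of_lt hlk
  have hψz : ∀ i, i ≠ lf → i ≠ kf → ∀ a, ψ (i,a) = 0 := by
    intro i h1 h2 a
    rcases lt_trichotomy i lf with hi | hi | hi
    · have := hls_bot i hi
      fin_cases a
      · exact this.1
      · exact this.2
    · exact absurd hi h1
    · rcases lt_trichotomy i kf with hi' | hi' | hi'
      · have := hmidψ i hi hi'
        fin_cases a
        · exact this.1
        · exact this.2
      · exact absurd hi' h2
      · have := hks_top i hi'
        fin_cases a
        · exact this.1
        · exact this.2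
  have hφz : ∀ i, i ≠ lf → i ≠ kf → ∀ a, φ (i,a) = 0 := by
    intro i h1 h2 a
    rcases lt_trichotomy i lf with hi | hi | hi
    · have := hlf_bot i hi
      fin_cases a
      · exact this.1
      · exact this.2
    · exact absurd hi h1
    · rcases lt_trichotomy i kf with hi' | hi' | hi'
      · have := hmidφ i hi hi'
        fin_cases a
        · exact this.1
        · exact this.2
      · exact absurd hi' h2
      · have := hkf_top i hi'
        fin_cases a
        · exact this.1
        · exact this.2
  have hC1' : ∀ a b : Fin 2, (starRingEnd ℂ) (ψ (lf,a)) * φ (lf,b)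
      + (starRingEnd ℂ) (ψ (kf,a)) * φ (kf,b) = 0 := by
    intro a b
    have hsum := hC1 a b
    have hsub : ∑ i : Fin n, (starRingEnd ℂ) (ψ (i,a)) * φ (i,b)
        = ∑ i ∈ ({lf, kf} : Finset (Fin n)), (starRingEnd ℂ) (ψ (i,a)) * φ (i,b) := by
      symm
      apply Finset.sum_subset (Finset.subset_univ _)
      intro i _ hi
      simp only [Finset.mem_insert, Finset.mem_singleton, not_or] at hi
      rw [hψz i hi.1 hi.2 a, map_zero, zero_mul]
    rw [hsub, Finset.sum_pair hne_lk] at hsum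
    exact hsum
  have hC2' : ∀ b : Fin 2, (starRingEnd ℂ) (φ (lf,b)) * φ (lf,b)
      + (starRingEnd ℂ) (φ (kf,b)) * φ (kf,b)
      = (starRingEnd ℂ) (ψ (lf,b)) * ψ (lf,b) + (starRingEnd ℂ) (ψ (kf,b)) * ψ (kf,b) := by
    intro b
    have hsum := hC2 b b
    have hsub1 : ∑ i : Fin n, (starRingEnd ℂ) (φ (i,b)) * φ (i,b)
        = ∑ i ∈ ({lf, kf} : Finset (Fin n)), (starRingEnd ℂ) (φ (i,b)) * φ (i,b) := by
      symm
      apply Finset.sum_subset (Finset.subset_univ _)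
      intro i _ hi
      simp only [Finset.mem_insert, Finset.mem_singleton, not_or] at hi
      rw [hφz i hi.1 hi.2 b, map_zero, zero_mul]
    have hsub2 : ∑ i : Fin n, (starRingEnd ℂ) (ψ (i,b)) * ψ (i,b)
        = ∑ i ∈ ({lf, kf} : Finset (Fin n)), (starRingEnd ℂ) (ψ (i,b)) * ψ (i,b) := by
      symm
      apply Finset.sum_subset (Finset.subset_univ _)
      intro i _ hi
      simp only [Finset.mem_insert, Finset.mem_singleton, not_or] at hi
      rw [hψz i hi.1 hi.2 b, map_zero, zero_mul]
    rw [hsub1, hsub2, Finset.sum_pair hne_lk, Finset.sum_pair hne_lk] at hsum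
    exact hsum
  -- final algebra
  obtain ⟨a0, ha0⟩ : ∃ a, ψ (kf, a) ≠ 0 := by
    rcases hks_ne with h'|h'
    exacts [⟨0, h'⟩, ⟨1, h'⟩]
  obtain ⟨b0, hb0⟩ : ∃ b, φ (lf, b) ≠ 0 := by
    rcases hlf_ne with h'|h'
    exacts [⟨0, h'⟩, ⟨1, h'⟩]
  have hψka : (starRingEnd ℂ) (ψ (kf,a0)) ≠ 0 := by simpa using ha0
  set α : ℂ := -((starRingEnd ℂ) (ψ (lf,a0)) / (starRingEnd ℂ) (ψ (kf,a0))) with hαdef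
  have hα : ∀ b, φ (kf,b) = α * φ (lf,b) := by
    intro b
    have h2 : (starRingEnd ℂ) (ψ (kf,a0)) * φ (kf,b)
        = -((starRingEnd ℂ) (ψ (lf,a0)) * φ (lf,b)) := by
      linear_combination hC1' a0 b
    rw [hαdef]
    field_simp
    linear_combination h2
  have hαne : α ≠ 0 := by
    intro h0
    have z0 : φ (kf,0) = 0 := by rw [hα 0, h0, zero_mul]
    have z1 : φ (kf,1) = 0 := by rw [hα 1, h0, zero_mul]
    exact hkf_ne.elim (fun h' => h' z0) (fun h' => h' z1)
  have hβ : ∀ a, (starRingEnd ℂ) (ψ (lf,a)) = -α * (starRingEnd ℂ) (ψ (kf,a)) := by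
    intro a
    have h1 := hC1' a b0
    rw [hα b0] at h1
    have h2 : ((starRingEnd ℂ) (ψ (lf,a)) + α * (starRingEnd ℂ) (ψ (kf,a))) * φ (lf,b0) = 0 := by
      linear_combination h1
    have h3 := (mul_eq_zero.mp h2).resolve_right hb0
    linear_combination h3
  have hβ' : ∀ a, ψ (lf,a) = -((starRingEnd ℂ) α) * ψ (kf,a) := by
    intro a
    have h2 := congrArg (starRingEnd ℂ) (hβ a)
    simpa only [map_neg, _root_.map_mul, Complex.conj_conj] using h2
  have P1 := hC3 lf kf hlk
  rw [hα 0, hα 1, hβ 0, hβ 1] at P1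
  have E1 : (starRingEnd ℂ) (ψ (kf,0)) * ((starRingEnd ℂ) eta * φ (lf,0))
      + (starRingEnd ℂ) (ψ (kf,1)) * (eta * φ (lf,1)) = 0 := by
    have h2 : α * α * ((starRingEnd ℂ) (ψ (kf,0)) * ((starRingEnd ℂ) eta * φ (lf,0))
        + (starRingEnd ℂ) (ψ (kf,1)) * (eta * φ (lf,1))) = 0 := by
      linear_combination -P1
    exact (mul_eq_zero.mp h2).resolve_left (mul_ne_zero hαne hαne)
  have P2 := hC4 kf lf hlk
  have htwoI : (2:ℂ) * Complex.I ≠ 0 := by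
    simp [Complex.I_ne_zero]
  have hx : (starRingEnd ℂ) (ψ (kf,0)) * φ (lf,0) = 0 := by
    have h3 : ((2:ℂ) * Complex.I) * ((starRingEnd ℂ) (ψ (kf,0)) * φ (lf,0)) = 0 := by
      linear_combination eta * P2 - (starRingEnd ℂ) eta * E1
        - ((starRingEnd ℂ) (ψ (kf,0)) * φ (lf,0)) * eta_mul_eta
        + ((starRingEnd ℂ) (ψ (kf,0)) * φ (lf,0)) * conj_eta_mul_conj_eta
    exact (mul_eq_zero.mp h3).resolve_left htwoI
  have hy : (starRingEnd ℂ) (ψ (kf,1)) * φ (lf,1) = 0 := by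
    have h3 : (-(2:ℂ) * Complex.I) * ((starRingEnd ℂ) (ψ (kf,1)) * φ (lf,1)) = 0 := by
      linear_combination (starRingEnd ℂ) eta * P2 - eta * E1
        - ((starRingEnd ℂ) (ψ (kf,1)) * φ (lf,1)) * conj_eta_mul_conj_eta
        + ((starRingEnd ℂ) (ψ (kf,1)) * φ (lf,1)) * eta_mul_eta
    refine (mul_eq_zero.mp h3).resolve_left ?_
    intro hc
    exact htwoI (by linear_combination -hc)
  have hnorm : ∀ b, (starRingEnd ℂ) (φ (lf,b)) * φ (lf,b)
      = (starRingEnd ℂ) (ψ (kf,b)) * ψ (kf,b) := by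
    intro b
    have h6 := hC2' b
    rw [hα b, hβ' b] at h6
    simp only [map_neg, _root_.map_mul, Complex.conj_conj, neg_mul, mul_neg, neg_neg] at h6
    have h7 : (1 + (starRingEnd ℂ) α * α) * ((starRingEnd ℂ) (φ (lf,b)) * φ (lf,b)
        - (starRingEnd ℂ) (ψ (kf,b)) * ψ (kf,b)) = 0 := by
      linear_combination h6
    have h8 := (mul_eq_zero.mp h7).resolve_left (one_add_conj_mul_ne α)
    linear_combination h8
  have hψk0 : ψ (kf,0) = 0 := by
    rcases mul_eq_zero.mp hx with h'|h'
    · simpa using h'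
    · apply conj_mul_self_eq_zero
      rw [← hnorm 0, h', mul_zero]
  have hψk1 : ψ (kf,1) = 0 := by
    rcases mul_eq_zero.mp hy with h'|h'
    · simpa using h'
    · apply conj_mul_self_eq_zero
      rw [← hnorm 1, h', mul_zero]
  exact hks_ne.elim (fun h' => h' hψk0) (fun h' => h' hψk1)
end

section
/- Let {M_i}_{i=1}^m be an observable on a finite-dimensional complex Hilbert space H and H₀ a subspace of H. Then H₀ is indistinguishable for {M_i} if and only if there exists an orthonormal basis {φ_k} of H₀ such that ⟨φ_k, M_i φ_j⟩ = 0 and ⟨φ_k, M_i φ_k⟩ = ⟨φ_j, M_i φ_j⟩ for all i and all k ≠ j. -/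
/-- A state on H whose range lies in a subspace H₀: a positive operator of trace one. -/
def IsStateSupportedIn {H : Type*} [NormedAddCommGroup H] [InnerProductSpace ℂ H]
    [CompleteSpace H] (H₀ : Submodule ℂ H) (ρ : H →L[ℂ] H) : Prop :=
  ρ.IsPositive ∧ LinearMap.trace ℂ H ↑ρ = 1 ∧ LinearMap.range (ρ : H →ₗ[ℂ] H) ≤ H₀

/-- H₀ is indistinguishable for the observable {M_i}: all states supported in H₀
give the same outcome probabilities Tr(M_i ρ). -/
def Indistinguishable {H : Type*} [NormedAddCommGroup H] [InnerProductSpace ℂ H]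
    [CompleteSpace H] {m : ℕ} (M : Fin m → H →L[ℂ] H) (H₀ : Submodule ℂ H) : Prop :=
  ∀ i, ∀ ρ₁ ρ₂ : H →L[ℂ] H,
    IsStateSupportedIn H₀ ρ₁ → IsStateSupportedIn H₀ ρ₂ →
    LinearMap.trace ℂ H ((M i : H →ₗ[ℂ] H) ∘ₗ (ρ₁ : H →ₗ[ℂ] H)) =
      LinearMap.trace ℂ H ((M i : H →ₗ[ℂ] H) ∘ₗ (ρ₂ : H →ₗ[ℂ] H))

/-!
A subspace `K` is indistinguishable exactly when every compression `P Mᵢ P` of the observable to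
`K` is a scalar `cᵢ P`. Pure states on unit vectors of `K` show that `⟪φ, Mᵢ φ⟫` is constant on
the unit sphere of `K`, which over `ℂ` forces the compression to be scalar by polarization;
conversely a scalar compression gives `Tr(Mᵢ ρ) = Tr(P Mᵢ P ρ) = cᵢ` for every state `ρ = P ρ P`
supported in `K`. An operator is scalar iff its matrix in some (equivalently, any) orthonormal
basis is diagonal with constant diagonal.
-/

open scoped InnerProductSpace
open InnerProductSpace (rankOne)

namespace LinearMap

variable {R M : Type*} [CommRing R] [AddCommGroup M] [Module R M]

theorem trace_mul_eq_of_mul_mul_eq_smul {A ρ P : M →ₗ[R] M} {c : R} (hPρ : P * ρ = ρ)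
    (hρP : ρ * P = ρ) (hPAP : P * A * P = c • P) : trace R M (A * ρ) = c * trace R M ρ :=
  calc trace R M (A * ρ) = trace R M (A * ρ * P) := by rw [mul_assoc, hρP]
    _ = trace R M (P * A * (P * ρ)) := by rw [trace_mul_comm, hPρ, mul_assoc]
    _ = c * trace R M ρ := by rw [← mul_assoc, hPAP, smul_mul_assoc, hPρ, map_smul, smul_eq_mul]

end LinearMap

section

variable {𝕜 E : Type*} [RCLike 𝕜] [NormedAddCommGroup E] [InnerProductSpace 𝕜 E]

namespace Submodule

variable (K : Submodule 𝕜 E) [K.HasOrthogonalProjection]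

noncomputable def compression (A : E →L[𝕜] E) : K →L[𝕜] K :=
  K.orthogonalProjectionOnto ∘L A ∘L K.subtypeL

variable {K}

@[simp]
theorem inner_compression_apply (A : E →L[𝕜] E) (u v : K) :
    ⟪u, K.compression A v⟫_𝕜 = ⟪(u : E), A v⟫_𝕜 :=
  inner_orthogonalProjectionOnto_eq_of_mem_left u _

theorem starProjection_mul_mul_starProjection_eq_smul {A : E →L[𝕜] E} {c : 𝕜}
    (hA : K.compression A = c • 1) :
    K.starProjection * A * K.starProjection = c • K.starProjection := by
  ext x
  exact congr(($hA (K.orthogonalProjectionOnto x) : E))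

end Submodule

theorem OrthonormalBasis.exists_eq_smul_one_iff {ι : Type*} [Fintype ι]
    (b : OrthonormalBasis ι 𝕜 E) (T : E →L[𝕜] E) :
    (∃ c : 𝕜, T = c • 1) ↔ ∀ k j, k ≠ j →
      ⟪b k, T (b j)⟫_𝕜 = 0 ∧ ⟪b k, T (b k)⟫_𝕜 = ⟪b j, T (b j)⟫_𝕜 := by
  classical
  constructor
  · rintro ⟨c, rfl⟩ k j hkj
    simp [inner_smul_right, b.inner_eq_ite, hkj]
  · intro h
    cases isEmpty_or_nonempty ι with
    | inl _ => exact ⟨0, ContinuousLinearMap.coe_injective (b.toBasis.ext isEmptyElim)⟩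
    | inr hι =>
      obtain ⟨k₀⟩ := hι
      have hdiag : ∀ k, ⟪b k, T (b k)⟫_𝕜 = ⟪b k₀, T (b k₀)⟫_𝕜 := fun k ↦ by
        by_cases hk : k = k₀
        · rw [hk]
        · exact (h k k₀ hk).2
      refine ⟨⟪b k₀, T (b k₀)⟫_𝕜, ContinuousLinearMap.coe_injective (b.toBasis.ext fun j ↦ ?_)⟩
      refine InnerProductSpace.ext_inner_left_basis b.toBasis fun k ↦ ?_
      by_cases hkj : k = j
      · subst hkj
        simp [inner_smul_right, hdiag]
      · simp [inner_smul_right, b.inner_eq_ite, hkj, (h k j hkj).1]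

end

theorem ContinuousLinearMap.exists_eq_smul_one_of_inner_map_self_eq {V : Type*}
    [NormedAddCommGroup V] [InnerProductSpace ℂ V] (T : V →L[ℂ] V)
    (hT : ∀ φ ψ : V, ‖φ‖ = 1 → ‖ψ‖ = 1 → ⟪φ, T φ⟫_ℂ = ⟪ψ, T ψ⟫_ℂ) : ∃ c : ℂ, T = c • 1 := by
  cases subsingleton_or_nontrivial V with
  | inl _ => exact ⟨0, Subsingleton.elim _ _⟩
  | inr _ =>
    obtain ⟨φ₀, hφ₀⟩ := exists_norm_eq V zero_le_one
    set c := ⟪φ₀, T φ₀⟫_ℂ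
    have hquad : ∀ x, ⟪x, T x⟫_ℂ = c * ⟪x, x⟫_ℂ := fun x ↦ by
      rcases eq_or_ne x 0 with rfl | hx
      · simp
      obtain ⟨r, u, hu, rfl⟩ : ∃ (r : ℂ) (u : V), ‖u‖ = 1 ∧ x = r • u :=
        ⟨‖x‖, (‖x‖⁻¹ : ℂ) • x, norm_smul_inv_norm hx,
          (smul_inv_smul₀ (by simpa using hx) x).symm⟩
      have huu : ⟪u, u⟫_ℂ = 1 := by simp [inner_self_eq_norm_sq_to_K, hu]
      rw [map_smul, inner_smul_left, inner_smul_right, inner_smul_left, inner_smul_right,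
        hT u φ₀ hu hφ₀, huu]
      ring
    refine ⟨c, sub_eq_zero.mp (coe_injective ((inner_map_self_eq_zero _).mp fun x ↦ ?_))⟩
    rw [← inner_conj_symm]
    simp [inner_sub_right, inner_smul_right, hquad]

section States

variable {H : Type*} [NormedAddCommGroup H] [InnerProductSpace ℂ H] [FiniteDimensional ℂ H]

theorem trace_comp_rankOne_self (A : H →L[ℂ] H) (φ : H) :
    LinearMap.trace ℂ H ((A : H →ₗ[ℂ] H) ∘ₗ (rankOne ℂ φ φ : H →ₗ[ℂ] H)) = ⟪φ, A φ⟫_ℂ := by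
  rw [← ContinuousLinearMap.toLinearMap_comp, InnerProductSpace.comp_rankOne,
    InnerProductSpace.trace_rankOne]

theorem isStateSupportedIn_rankOne_self {K : Submodule ℂ H} {φ : H} (hφK : φ ∈ K)
    (hφ : ‖φ‖ = 1) : IsStateSupportedIn K (rankOne ℂ φ φ) := by
  refine ⟨InnerProductSpace.isPositive_rankOne_self φ, ?_, ?_⟩
  · simp [InnerProductSpace.trace_rankOne, inner_self_eq_norm_sq_to_K, hφ]
  · rintro _ ⟨x, rfl⟩
    exact K.smul_mem _ hφK

theorem IsStateSupportedIn.trace_comp_eq {K : Submodule ℂ H} {ρ A : H →L[ℂ] H} {c : ℂ}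
    (hρ : IsStateSupportedIn K ρ) (hA : K.compression A = c • 1) :
    LinearMap.trace ℂ H ((A : H →ₗ[ℂ] H) ∘ₗ (ρ : H →ₗ[ℂ] H)) = c := by
  obtain ⟨hpos, htrace, hrange⟩ := hρ
  have hPρ : K.starProjection * ρ = ρ :=
    ContinuousLinearMap.ext fun x ↦ K.starProjection_eq_self_iff.mpr (hrange ⟨x, rfl⟩)
  have hρP : ρ * K.starProjection = ρ := by
    simpa [(isSelfAdjoint_starProjection K).star_eq, hpos.isSelfAdjoint.star_eq] using
      congr(star $hPρ)
  have hPAP := K.starProjection_mul_mul_starProjection_eq_smul hA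
  have h := LinearMap.trace_mul_eq_of_mul_mul_eq_smul congr(($hPρ : H →ₗ[ℂ] H))
    congr(($hρP : H →ₗ[ℂ] H)) congr(($hPAP : H →ₗ[ℂ] H))
  simpa [htrace, Module.End.mul_eq_comp] using h

end States

theorem indistinguishable_iff_forall_exists_compression_eq_smul {H : Type*}
    [NormedAddCommGroup H] [InnerProductSpace ℂ H] [FiniteDimensional ℂ H] {m : ℕ}
    (M : Fin m → H →L[ℂ] H) (K : Submodule ℂ H) :
    Indistinguishable M K ↔ ∀ i, ∃ c : ℂ, K.compression (M i) = c • 1 := by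
  constructor
  · intro hM i
    refine (K.compression (M i)).exists_eq_smul_one_of_inner_map_self_eq fun φ ψ hφ hψ ↦ ?_
    simp only [Submodule.inner_compression_apply, ← trace_comp_rankOne_self]
    exact hM i _ _ (isStateSupportedIn_rankOne_self φ.2 hφ)
      (isStateSupportedIn_rankOne_self ψ.2 hψ)
  · intro hM i ρ₁ ρ₂ h₁ h₂
    obtain ⟨c, hc⟩ := hM i
    rw [h₁.trace_comp_eq hc, h₂.trace_comp_eq hc]

theorem indistinguishable_iff_exists_orthonormalBasis_general
    {H : Type*} [NormedAddCommGroup H] [InnerProductSpace ℂ H] [FiniteDimensional ℂ H]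
    {m : ℕ} (M : Fin m → H →L[ℂ] H)
    (H₀ : Submodule ℂ H) :
    Indistinguishable M H₀ ↔
      ∃ b : OrthonormalBasis (Fin (Module.finrank ℂ H₀)) ℂ H₀,
        ∀ i, ∀ k j, k ≠ j →
          (inner ℂ ((b k : H)) (M i (b j : H)) : ℂ) = 0 ∧
          (inner ℂ ((b k : H)) (M i (b k : H)) : ℂ) =
            (inner ℂ ((b j : H)) (M i (b j : H)) : ℂ) := by
  rw [indistinguishable_iff_forall_exists_compression_eq_smul]
  constructor
  · intro h
    refine ⟨stdOrthonormalBasis ℂ H₀, fun i ↦ ?_⟩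
    simpa only [Submodule.inner_compression_apply] using
      ((stdOrthonormalBasis ℂ H₀).exists_eq_smul_one_iff _).mp (h i)
  · rintro ⟨b, hb⟩ i
    refine (b.exists_eq_smul_one_iff _).mpr ?_
    simpa only [Submodule.inner_compression_apply] using hb i

/-- A subspace H₀ is indistinguishable for an observable {M_i} iff there is an orthonormal
basis {φ_k} of H₀ with ⟨φ_k, M_i φ_j⟩ = 0 and ⟨φ_k, M_i φ_k⟩ = ⟨φ_j, M_i φ_j⟩ for all i
and all k ≠ j. -/
theorem indistinguishable_iff_exists_orthonormalBasis
    {H : Type*} [NormedAddCommGroup H] [InnerProductSpace ℂ H] [FiniteDimensional ℂ H]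
    {m : ℕ} (M : Fin m → H →L[ℂ] H)
    (hpos : ∀ i, (M i).IsPositive) (hsum : ∑ i, M i = 1)
    (H₀ : Submodule ℂ H) :
    Indistinguishable M H₀ ↔
      ∃ b : OrthonormalBasis (Fin (Module.finrank ℂ H₀)) ℂ H₀,
        ∀ i, ∀ k j, k ≠ j →
          (inner ℂ ((b k : H)) (M i (b j : H)) : ℂ) = 0 ∧
          (inner ℂ ((b k : H)) (M i (b k : H)) : ℂ) =
            (inner ℂ ((b j : H)) (M i (b j : H)) : ℂ) :=
  indistinguishable_iff_exists_orthonormalBasis_general M H₀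
end
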